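/- Let G be a hypergraph and k ≥ 1. If G contains a separation of order < k that distinguishes two tangles, then G contains a separation (A,Ā) such that: (A,Ā) distinguishes two tangles; λ(A) < k; |V(A)| ≤ |V(Ā)|; both A and Ā are well-linked; and A is internally connected. -/
import Mathlib


open Finset

variable {V E : Type} [Fintype V] [DecidableEq V] [Fintype E] [DecidableEq E]

/-- `V(A)`: the union of the vertex sets of the hyperedges in `A`. -/
def hVerts (inc : E → Finset V) (A : Finset E) : Finset V :=
  A.biUnion inc

/-- The border `bd(A) = V(A) ∩ V(Ā)` of a set of hyperedges. -/
def hBd (inc : E → Finset V) (A : Finset E) : Finset V :=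
  hVerts inc A ∩ hVerts inc Aᶜ

/-- The order function `λ(A) = |bd(A)|`. -/
def hLam (inc : E → Finset V) (A : Finset E) : ℕ :=
  (hBd inc A).card

/-- `A` is well-linked: for every bipartition `(B1, B2)` of `A`, `λ(B1) ≥ λ(A)` or
`λ(B2) ≥ λ(A)`. -/
def WellLinked (inc : E → Finset V) (A : Finset E) : Prop :=
  ∀ B1 B2 : Finset E, Disjoint B1 B2 → B1 ∪ B2 = A →
    hLam inc A ≤ hLam inc B1 ∨ hLam inc A ≤ hLam inc B2

/-- A nonempty set `A` is internally connected: there is no bipartition `(B1, B2)` of `A`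
into nonempty sets with `bd(B1) ⊆ bd(A)` and `bd(B2) ⊆ bd(A)`. -/
def InternallyConnected (inc : E → Finset V) (A : Finset E) : Prop :=
  A.Nonempty ∧
  ¬ ∃ B1 B2 : Finset E, Disjoint B1 B2 ∧ B1 ∪ B2 = A ∧ B1.Nonempty ∧ B2.Nonempty ∧
      hBd inc B1 ⊆ hBd inc A ∧ hBd inc B2 ⊆ hBd inc A

/-- `𝒯` is a tangle of order `k` of the hypergraph. -/
def IsTangle (inc : E → Finset V) (k : ℕ) (𝒯 : Set (Finset E)) : Prop :=
  (∀ A ∈ 𝒯, hLam inc A < k) ∧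
  (∀ A : Finset E, hLam inc A < k → A ∈ 𝒯 ∨ Aᶜ ∈ 𝒯) ∧
  (∀ A ∈ 𝒯, ∀ B ∈ 𝒯, ∀ C ∈ 𝒯, A ∪ B ∪ C ≠ Finset.univ) ∧
  (∀ e : E, ({e}ᶜ : Finset E) ∉ 𝒯)

/-- The separation `(A, Ā)` distinguishes two tangles of the hypergraph. -/
def DistinguishesTwoTangles (inc : E → Finset V) (A : Finset E) : Prop :=
  ∃ (k1 k2 : ℕ) (𝒯1 𝒯2 : Set (Finset E)),
    IsTangle inc k1 𝒯1 ∧ IsTangle inc k2 𝒯2 ∧ A ∈ 𝒯1 ∧ Aᶜ ∈ 𝒯2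

lemma hVerts_mono (inc : E → Finset V) {A B : Finset E} (h : A ⊆ B) :
    hVerts inc A ⊆ hVerts inc B :=
  Finset.biUnion_subset_biUnion_of_subset_left _ h

lemma hLam_compl (inc : E → Finset V) (A : Finset E) : hLam inc Aᶜ = hLam inc A := by
  unfold hLam hBd
  rw [compl_compl, inter_comm]

lemma dist_compl (inc : E → Finset V) {A : Finset E}
    (h : DistinguishesTwoTangles inc A) : DistinguishesTwoTangles inc Aᶜ := by
  obtain ⟨k1, k2, T1, T2, h1, h2, hA, hAc⟩ := h
  exact ⟨k2, k1, T2, T1, h2, h1, hAc, by simpa using hA⟩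

lemma union_compl_of_subset {B A : Finset E} (h : B ⊆ A) : A ∪ Bᶜ = Finset.univ :=
  Finset.eq_univ_of_forall fun e => by
    by_cases he : e ∈ B
    · exact Finset.mem_union_left _ (h he)
    · exact Finset.mem_union_right _ (Finset.mem_compl.2 he)

lemma key (inc : E → Finset V) {k1 k2 : ℕ} {T1 T2 : Set (Finset E)}
    (h1 : IsTangle inc k1 T1) (h2 : IsTangle inc k2 T2)
    {A B1 B2 : Finset E} (hA1 : A ∈ T1) (hA2 : Aᶜ ∈ T2)
    (hd : Disjoint B1 B2) (hu : B1 ∪ B2 = A)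
    (l11 : hLam inc B1 < k1) (l12 : hLam inc B1 < k2)
    (l21 : hLam inc B2 < k1) (l22 : hLam inc B2 < k2) :
    (B1 ∈ T1 ∧ B1ᶜ ∈ T2) ∨ (B2 ∈ T1 ∧ B2ᶜ ∈ T2) := by
  obtain ⟨ha1, ha2, ha3, ha4⟩ := h1
  obtain ⟨hb1, hb2, hb3, hb4⟩ := h2
  have hB1A : B1 ⊆ A := hu ▸ Finset.subset_union_left
  have hB2A : B2 ⊆ A := hu ▸ Finset.subset_union_right
  have hB1T1 : B1 ∈ T1 := by
    rcases ha2 B1 l11 with h | h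
    · exact h
    · exact absurd (by rw [union_compl_of_subset hB1A]; simp)
        (ha3 A hA1 B1ᶜ h A hA1)
  have hB2T1 : B2 ∈ T1 := by
    rcases ha2 B2 l21 with h | h
    · exact h
    · exact absurd (by rw [union_compl_of_subset hB2A]; simp)
        (ha3 A hA1 B2ᶜ h A hA1)
  rcases hb2 B1 l12 with h | h
  · -- B1 ∈ T2
    rcases hb2 B2 l22 with h' | h'
    · exfalso
      apply hb3 Aᶜ hA2 B1 h B2 h'
      rw [Finset.union_assoc, hu]
      exact Finset.eq_univ_of_forall fun e => by
        by_cases he : e ∈ A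
        · exact Finset.mem_union_right _ he
        · exact Finset.mem_union_left _ (Finset.mem_compl.2 he)
    · exact Or.inr ⟨hB2T1, h'⟩
  · exact Or.inl ⟨hB1T1, h⟩

lemma minOrder_wellLinked (inc : E → Finset V) {A : Finset E}
    (hdist : DistinguishesTwoTangles inc A)
    (hmin : ∀ B : Finset E, DistinguishesTwoTangles inc B → hLam inc A ≤ hLam inc B) :
    WellLinked inc A := by
  intro B1 B2 hd hu
  by_contra hc
  push_neg at hc
  obtain ⟨hc1, hc2⟩ := hc
  obtain ⟨k1, k2, T1, T2, h1, h2, hA, hAc⟩ := hdist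
  have hk1 : hLam inc A < k1 := h1.1 A hA
  have hk2 : hLam inc A < k2 := by
    have := h2.1 Aᶜ hAc
    rwa [hLam_compl] at this
  rcases key inc h1 h2 hA hAc hd hu (hc1.trans hk1) (hc1.trans hk2)
      (hc2.trans hk1) (hc2.trans hk2) with ⟨x, y⟩ | ⟨x, y⟩
  · exact absurd (hmin B1 ⟨k1, k2, T1, T2, h1, h2, x, y⟩) (not_le.2 hc1)
  · exact absurd (hmin B2 ⟨k1, k2, T1, T2, h1, h2, x, y⟩) (not_le.2 hc2)

/-- If a hypergraph contains a separation of order `< k` that distinguishes two tangles,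
then it contains a separation `(A, Ā)` distinguishing two tangles with `λ(A) < k`,
`|V(A)| ≤ |V(Ā)|`, `(A, Ā)` doubly well-linked, and `A` internally connected. -/
theorem exists_good_distinguishing_separation (inc : E → Finset V)
    (hcov : ∀ v : V, ∃ e : E, v ∈ inc e) (k : ℕ) (hk : 1 ≤ k)
    (h : ∃ B : Finset E, hLam inc B < k ∧ DistinguishesTwoTangles inc B) :
    ∃ A : Finset E,
      DistinguishesTwoTangles inc A ∧
      hLam inc A < k ∧
      (hVerts inc A).card ≤ (hVerts inc Aᶜ).card ∧
      WellLinked inc A ∧ WellLinked inc Aᶜ ∧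
      InternallyConnected inc A := by
  classical
  obtain ⟨B0, hB0k, hB0d⟩ := h
  set S : Finset (Finset E) :=
    Finset.univ.filter (fun A => hLam inc A < k ∧ DistinguishesTwoTangles inc A) with hS
  have hmemS : ∀ A : Finset E,
      A ∈ S ↔ hLam inc A < k ∧ DistinguishesTwoTangles inc A := by
    intro A; simp [hS]
  have hSne : S.Nonempty := ⟨B0, (hmemS B0).2 ⟨hB0k, hB0d⟩⟩
  obtain ⟨A1, hA1S, m1⟩ := S.exists_min_image (hLam inc) hSne
  set S1 : Finset (Finset E) := S.filter (fun B => hLam inc B = hLam inc A1) with hS1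
  have hA1S1 : A1 ∈ S1 := by simp [hS1, hA1S]
  obtain ⟨A2, hA2S1, m2⟩ := S1.exists_min_image (fun B => (hVerts inc B).card) ⟨A1, hA1S1⟩
  set S2 : Finset (Finset E) :=
    S1.filter (fun B => (hVerts inc B).card = (hVerts inc A2).card) with hS2
  have hA2S2 : A2 ∈ S2 := by simp [hS2, hA2S1]
  obtain ⟨A, hAS2, m3⟩ := S2.exists_min_image Finset.card ⟨A2, hA2S2⟩
  rw [hS2, Finset.mem_filter] at hAS2
  obtain ⟨hAS1, hAV⟩ := hAS2
  rw [hS1, Finset.mem_filter] at hAS1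
  obtain ⟨hAS, hAlam⟩ := hAS1
  obtain ⟨hAk, hAd⟩ := (hmemS A).1 hAS
  -- minimality properties
  have Plam : ∀ B : Finset E, B ∈ S → hLam inc A ≤ hLam inc B := by
    intro B hB
    rw [hAlam]
    exact m1 B hB
  have PminAll : ∀ B : Finset E, DistinguishesTwoTangles inc B →
      hLam inc A ≤ hLam inc B := by
    intro B hB
    by_cases hBk : hLam inc B < k
    · exact Plam B ((hmemS B).2 ⟨hBk, hB⟩)
    · exact le_of_lt (lt_of_lt_of_le hAk (not_lt.1 hBk))
  have PV : ∀ B : Finset E, B ∈ S → hLam inc B = hLam inc A →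
      (hVerts inc A).card ≤ (hVerts inc B).card := by
    intro B hB hBl
    have hBS1 : B ∈ S1 := by
      rw [hS1, Finset.mem_filter]
      exact ⟨hB, by rw [hBl, hAlam]⟩
    rw [hAV]
    exact m2 B hBS1
  have PE : ∀ B : Finset E, B ∈ S → hLam inc B = hLam inc A →
      (hVerts inc B).card = (hVerts inc A).card → A.card ≤ B.card := by
    intro B hB hBl hBV
    have hBS1 : B ∈ S1 := by
      rw [hS1, Finset.mem_filter]
      exact ⟨hB, by rw [hBl, hAlam]⟩
    have hBS2 : B ∈ S2 := by
      rw [hS2, Finset.mem_filter]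
      exact ⟨hBS1, by rw [hBV, hAV]⟩
    exact m3 B hBS2
  have hAcS : Aᶜ ∈ S := (hmemS Aᶜ).2 ⟨by rwa [hLam_compl], dist_compl inc hAd⟩
  obtain ⟨k1, k2, T1, T2, h1, h2, hT1, hT2⟩ := hAd
  have hk1 : hLam inc A < k1 := h1.1 A hT1
  have hk2 : hLam inc A < k2 := by
    have := h2.1 Aᶜ hT2
    rwa [hLam_compl] at this
  refine ⟨A, ⟨k1, k2, T1, T2, h1, h2, hT1, hT2⟩, hAk, ?_, ?_, ?_, ?_, ?_⟩
  · exact PV Aᶜ hAcS (hLam_compl inc A)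
  · exact minOrder_wellLinked inc ⟨k1, k2, T1, T2, h1, h2, hT1, hT2⟩ PminAll
  · refine minOrder_wellLinked inc (dist_compl inc ⟨k1, k2, T1, T2, h1, h2, hT1, hT2⟩) ?_
    intro B hB
    rw [hLam_compl]
    exact PminAll B hB
  · by_contra hA0
    rw [Finset.not_nonempty_iff_eq_empty] at hA0
    subst hA0
    rw [Finset.compl_empty] at hT2
    exact h2.2.2.1 Finset.univ hT2 Finset.univ hT2 Finset.univ hT2 (by simp)
  · rintro ⟨B1, B2, hd, hu, hn1, hn2, hb1, hb2⟩
    have handle : ∀ C D : Finset E, Disjoint C D → C ∪ D = A → D.Nonempty →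
        C ∈ T1 → Cᶜ ∈ T2 → hBd inc C ⊆ hBd inc A → False := by
      intro C D hcd hCD hDne hCT1 hCT2 hbd
      have hCl : hLam inc C ≤ hLam inc A := Finset.card_le_card hbd
      have hCS : C ∈ S := (hmemS C).2
        ⟨lt_of_le_of_lt hCl hAk, ⟨k1, k2, T1, T2, h1, h2, hCT1, hCT2⟩⟩
      have hCl' : hLam inc C = hLam inc A := le_antisymm hCl (Plam C hCS)
      have hCA : C ⊆ A := hCD ▸ Finset.subset_union_left
      have hCV : (hVerts inc C).card = (hVerts inc A).card :=
        le_antisymm (Finset.card_le_card (hVerts_mono inc hCA)) (PV C hCS hCl')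
      have hCE : A.card ≤ C.card := PE C hCS hCl' hCV
      have hCne : C ≠ A := by
        intro hCeq
        have hDC : D ⊆ C := hCeq ▸ (hCD ▸ Finset.subset_union_right)
        have : D = ∅ := Finset.eq_empty_of_forall_notMem
          fun x hx => Finset.disjoint_right.1 hcd hx (hDC hx)
        exact hDne.ne_empty this
      have : C.card < A.card := Finset.card_lt_card (hCA.ssubset_of_ne hCne)
      omega
    have lb1 : hLam inc B1 ≤ hLam inc A := Finset.card_le_card hb1
    have lb2 : hLam inc B2 ≤ hLam inc A := Finset.card_le_card hb2
    rcases key inc h1 h2 hT1 hT2 hd hu (lt_of_le_of_lt lb1 hk1) (lt_of_le_of_lt lb1 hk2)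
        (lt_of_le_of_lt lb2 hk1) (lt_of_le_of_lt lb2 hk2) with ⟨x, y⟩ | ⟨x, y⟩
    · exact handle B1 B2 hd hu hn2 x y hb1
    · exact handle B2 B1 hd.symm (by rw [Finset.union_comm, hu]) hn1 x y hb2
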